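/- arXiv:1109.1619 — 3 statements merged into one kernel-verified Lean document; each statement's English description precedes it below -/
import Mathlib

section
/- Let K and L be nonempty compact convex sets in ℝⁿ (n ≥ 2). Suppose that for every unit vector u ∈ ℝⁿ, the orthogonal projection L_u of L onto the hyperplane u^⊥ contains a translate of the corresponding projection K_u. Then the n-dimensional volumes satisfy V_n(K) ≤ (n/(n-1))ⁿ · V_n(L). -/
/-
Writing `h_K` for the support function of `K`, it suffices to find a linear functional
`φ ≤ (n/(n-1)) h_L - h_K`: then `K` lies in a translate of `(n/(n-1)) • L`. By the M. Riesz
extension theorem applied to the cone spanned by the graph of `g = (n/(n-1)) h_L - h_K`, such a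
`φ` exists as soon as `∑ g(aᵢ) ≥ 0` for every finite family with `∑ aᵢ = 0`, and an affine
dependence argument reduces this to families of at most `n + 1` vectors. At most `n` vectors
with zero sum lie in a hyperplane `u^⊥`, where the shadow of `L` contains a translate of that of `K`, so
`∑ h_K(aᵢ) ≤ ∑ h_L(aᵢ)`. For `n + 1` vectors, merging one of them with each of the others yields
`n` families of `n` vectors, and adding up their inequalities gives
`(n-1) ∑ h_K(aᵢ) ≤ n ∑ h_L(aᵢ)`.
-/

open Set MeasureTheory Pointwise

noncomputable def projSet {n : ℕ} (u : EuclideanSpace ℝ (Fin n))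
    (K : Set (EuclideanSpace ℝ (Fin n))) : Set (EuclideanSpace ℝ (Fin n)) :=
  (fun x => (Submodule.orthogonalProjection (ℝ ∙ u)ᗮ x : EuclideanSpace ℝ (Fin n))) '' K

open Module RealInnerProductSpace
open scoped NNReal

lemma Fintype.sum_comp_update {ι α M : Type*} [Fintype ι] [DecidableEq ι] [AddCommGroup M]
    (F : α → M) (y : ι → α) (k : ι) (z : α) :
    ∑ j, F (Function.update y k z j) = ∑ j, F (y j) - F (y k) + F z := by
  simp only [Function.apply_update (fun _ => F), Finset.sum_update_of_mem (Finset.mem_univ k),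
    Finset.sdiff_singleton_eq_erase, Finset.sum_erase_eq_sub (Finset.mem_univ k)]
  abel

section ZeroSum

variable {V : Type*} [AddCommGroup V] [Module ℝ V]

structure IsSublinear (p : V → ℝ) : Prop where
  add_le : ∀ x y, p (x + y) ≤ p x + p y
  smul_eq : ∀ t : ℝ, 0 ≤ t → ∀ x, p (t • x) = t * p x

namespace IsSublinear

variable {p : V → ℝ}

lemma map_zero (hp : IsSublinear p) : p 0 = 0 := by
  simpa using hp.smul_eq 0 le_rfl 0

lemma map_sum_le (hp : IsSublinear p) {ι : Type*} (s : Finset ι) (a : ι → V) :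
    p (∑ i ∈ s, a i) ≤ ∑ i ∈ s, p (a i) :=
  Finset.le_sum_of_subadditive p hp.map_zero.le hp.add_le s a

lemma sum_nonneg_of_sum_eq_zero (hp : IsSublinear p) {ι : Type*} {s : Finset ι} {a : ι → V}
    (ha : ∑ i ∈ s, a i = 0) : 0 ≤ ∑ i ∈ s, p (a i) := by
  simpa [ha, hp.map_zero] using hp.map_sum_le s a

end IsSublinear

def ZeroSumNonneg (g : V → ℝ) (m : ℕ) : Prop :=
  ∀ a : Fin m → V, ∑ i, a i = 0 → 0 ≤ ∑ i, g (a i)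

lemma ZeroSumNonneg.succ_of_not_affineIndependent {g : V → ℝ}
    (hg : ∀ t : ℝ, 0 ≤ t → ∀ v, g (t • v) = t * g v) {m : ℕ} (h : ZeroSumNonneg g m)
    {a : Fin (m + 1) → V} (ha : ∑ i, a i = 0) (hdep : ¬AffineIndependent ℝ a) :
    0 ≤ ∑ i, g (a i) := by
  obtain ⟨w, hw_sum, hw_rel, hw_ne, hD⟩ : ∃ w : Fin (m + 1) → ℝ, ∑ i, w i = 0 ∧
      ∑ i, w i • a i = 0 ∧ (∃ i, w i ≠ 0) ∧ 0 ≤ ∑ i, w i * g (a i) := by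
    rw [affineIndependent_iff_of_fintype] at hdep
    push Not at hdep
    obtain ⟨w, hw_sum, hw_rel, i, hi⟩ := hdep
    rw [Finset.univ.weightedVSub_eq_linear_combination hw_sum] at hw_rel
    rcases le_total 0 (∑ i, w i * g (a i)) with hD | hD
    · exact ⟨w, hw_sum, hw_rel, ⟨i, hi⟩, hD⟩
    · refine ⟨-w, ?_, ?_, ⟨i, neg_ne_zero.mpr hi⟩, ?_⟩
      · simp [hw_sum]
      · simp [hw_rel]
      · simpa using hD
  obtain ⟨j, -, hj⟩ := Finset.exists_pos_of_sum_zero_of_exists_nonzero w hw_sum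
    (by simpa using hw_ne)
  obtain ⟨k, hk⟩ := Finite.exists_max w
  have hk_pos : 0 < w k := hj.trans_le (hk j)
  -- Reweighting by `1 - w / w k ≥ 0` keeps the sum zero and kills the `k`-th vector.
  set b : Fin (m + 1) → V := fun i => (1 - w i / w k) • a i with hb
  have hb_coef : ∀ i, 0 ≤ 1 - w i / w k := fun i =>
    sub_nonneg.mpr ((div_le_one hk_pos).mpr (hk i))
  have hbk : b k = 0 := by simp [hb, hk_pos.ne']
  have hb_sum : ∑ i, b i = 0 := by
    simp only [hb, sub_smul, one_smul, Finset.sum_sub_distrib, ha, div_eq_inv_mul, mul_smul,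
      ← Finset.smul_sum, hw_rel, smul_zero, sub_zero]
  have hgb : ∑ i, g (b i) = ∑ i, g (a i) - (∑ i, w i * g (a i)) / w k := by
    simp only [hb, hg _ (hb_coef _), sub_mul, one_mul, Finset.sum_sub_distrib, Finset.sum_div,
      div_mul_eq_mul_div]
  have hg0 : g 0 = 0 := by simpa using hg 0 le_rfl 0
  have hb_nonneg : 0 ≤ ∑ i, g (b i) := by
    have := h (fun i => b (k.succAbove i)) (by
      rw [Fin.sum_univ_succAbove b k, hbk, zero_add] at hb_sum; exact hb_sum)
    rwa [Fin.sum_univ_succAbove (fun i => g (b i)) k, hbk, hg0, zero_add]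
  have := div_nonneg hD hk_pos.le
  linarith

lemma zeroSumNonneg_of_le_finrank_succ [FiniteDimensional ℝ V] {g : V → ℝ}
    (hg : ∀ t : ℝ, 0 ≤ t → ∀ v, g (t • v) = t * g v)
    (hsmall : ∀ m ≤ finrank ℝ V + 1, ZeroSumNonneg g m) (m : ℕ) : ZeroSumNonneg g m := by
  induction m with
  | zero => exact hsmall 0 (Nat.zero_le _)
  | succ m ih =>
    by_cases hm : m + 1 ≤ finrank ℝ V + 1
    · exact hsmall _ hm
    intro a ha
    refine ih.succ_of_not_affineIndependent hg ha fun hind => hm ?_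
    simpa using hind.card_le_finrank_succ.trans (Nat.add_le_add_right (Submodule.finrank_le _) 1)

lemma exists_linearMap_le_of_zeroSumNonneg {g : V → ℝ}
    (hg : ∀ t : ℝ, 0 ≤ t → ∀ v, g (t • v) = t * g v) (h : ∀ m, ZeroSumNonneg g m) :
    ∃ φ : V →ₗ[ℝ] ℝ, ∀ v, φ v ≤ g v := by
  let C : PointedCone ℝ (V × ℝ) := Submodule.span ℝ≥0 {p | g p.1 = p.2}
  have hC : ∀ y : ℝ, ((0 : V), y) ∈ C → 0 ≤ y := by
    intro y hy
    obtain ⟨m, c, b, hb⟩ := Submodule.mem_span_set'.mp hy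
    have h1 : ∑ i, (c i : ℝ) • (b i : V × ℝ).1 = 0 :=
      Prod.fst_sum.symm.trans (congrArg Prod.fst hb)
    have h2 : ∑ i, (c i : ℝ) * (b i : V × ℝ).2 = y :=
      Prod.snd_sum.symm.trans (congrArg Prod.snd hb)
    calc 0 ≤ ∑ i, g ((c i : ℝ) • (b i : V × ℝ).1) := h m _ h1
      _ = y := by
        rw [← h2]
        exact Finset.sum_congr rfl fun i _ => by rw [hg _ (c i).coe_nonneg, (b i).2]
  let f : (V × ℝ) →ₗ.[ℝ] ℝ := (LinearMap.snd ℝ V ℝ).toPMap (LinearMap.ker (LinearMap.fst ℝ V ℝ))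
  obtain ⟨G, hGf, hG⟩ := riesz_extension C f
    (fun p hp => by
      obtain ⟨⟨x, y⟩, hx⟩ := p
      obtain rfl : x = 0 := hx
      exact hC y hp)
    (fun p => ⟨⟨(0, g p.1 - p.2), LinearMap.mem_ker.mpr rfl⟩, Submodule.subset_span (by simp)⟩)
  refine ⟨-G.comp (LinearMap.inl ℝ V ℝ), fun v => ?_⟩
  have hG0 : G (0, g v) = g v := hGf ⟨(0, g v), LinearMap.mem_ker.mpr rfl⟩
  have hGv : 0 ≤ G (v, g v) := hG _ (Submodule.subset_span rfl)
  have hsplit : G (v, g v) = G (v, 0) + G (0, g v) := by rw [← map_add]; simp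
  simp only [LinearMap.neg_apply, LinearMap.comp_apply, LinearMap.inl_apply]
  linarith

lemma sub_one_mul_sum_le_mul_sum {p q : V → ℝ} (hp : IsSublinear p) (hq : IsSublinear q)
    {n : ℕ} (hn : 1 ≤ n) (hpq : ZeroSumNonneg (q - p) n)
    {a : Fin (n + 1) → V} (ha : ∑ i, a i = 0) :
    ((n : ℝ) - 1) * ∑ i, p (a i) ≤ n * ∑ i, q (a i) := by
  rw [Fin.sum_univ_succ] at ha ⊢
  rw [Fin.sum_univ_succ]
  set x := a 0
  set y := fun i : Fin n => a i.succ
  -- Merging `x` into the `k`-th vector of `y` leaves `n` vectors summing to zero.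
  have hmerge : ∀ k, ∑ j, p (y j) - p (y k) + p (x + y k) ≤ ∑ j, q (y j) + q x := by
    intro k
    have hbal : ∑ j, Function.update y k (x + y k) j = 0 := by
      have := Fintype.sum_comp_update id y k (x + y k)
      simp only [id] at this
      rw [this, ← ha]
      abel
    have := hpq _ hbal
    simp only [Pi.sub_apply, Finset.sum_sub_distrib, Fintype.sum_comp_update] at this
    linarith [hq.add_le x (y k)]
  have hcollapse : ((n : ℝ) - 1) * p x ≤ ∑ k, p (x + y k) := by
    have : ∑ k, (x + y k) = ((n : ℝ) - 1) • x := by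
      rw [Finset.sum_add_distrib, Finset.sum_const, Finset.card_univ, Fintype.card_fin,
        sub_smul, one_smul, ← Nat.cast_smul_eq_nsmul ℝ]
      linear_combination (norm := abel) ha
    rw [← hp.smul_eq _ (by simpa using hn), ← this]
    exact hp.map_sum_le _ _
  have hsum := Finset.sum_le_sum fun k (_ : k ∈ Finset.univ) => hmerge k
  simp only [Finset.sum_add_distrib, Finset.sum_sub_distrib, Finset.sum_const, Finset.card_univ,
    Fintype.card_fin, nsmul_eq_mul] at hsum
  nlinarith

lemma zeroSumNonneg_div_smul_sub {p q : V → ℝ} (hp : IsSublinear p) (hq : IsSublinear q)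
    {n : ℕ} (hn : 2 ≤ n) (hpq : ∀ m ≤ n, ZeroSumNonneg (q - p) m) :
    ∀ m ≤ n + 1, ZeroSumNonneg (((n : ℝ) / ((n : ℝ) - 1)) • q - p) m := by
  have hn' : (2 : ℝ) ≤ n := by exact_mod_cast hn
  have hr : 1 ≤ (n : ℝ) / ((n : ℝ) - 1) := by rw [le_div_iff₀ (by linarith)]; linarith
  intro m hm a ha
  simp only [Pi.sub_apply, Pi.smul_apply, smul_eq_mul, Finset.sum_sub_distrib,
    ← Finset.mul_sum, sub_nonneg]
  rcases hm.lt_or_eq with hm | rfl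
  · have hle := hpq m (Nat.lt_succ_iff.mp hm) a ha
    simp only [Pi.sub_apply, Finset.sum_sub_distrib, sub_nonneg] at hle
    nlinarith [hq.sum_nonneg_of_sum_eq_zero ha]
  · rw [div_mul_eq_mul_div, le_div_iff₀ (by linarith), mul_comm]
    exact sub_one_mul_sum_le_mul_sum hp hq (by omega) (hpq n le_rfl) ha

end ZeroSum

section SupportFunction

variable {E : Type*} [NormedAddCommGroup E] [InnerProductSpace ℝ E] {K : Set E}

noncomputable def supportFun (K : Set E) (v : E) : ℝ :=
  sSup ((fun x => ⟪x, v⟫) '' K)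

lemma le_supportFun (hK : IsCompact K) {x : E} (hx : x ∈ K) (v : E) :
    ⟪x, v⟫ ≤ supportFun K v :=
  le_csSup (hK.bddAbove_image (continuous_id.inner continuous_const).continuousOn)
    (mem_image_of_mem _ hx)

lemma supportFun_le (hK : K.Nonempty) {v : E} {c : ℝ} (h : ∀ x ∈ K, ⟪x, v⟫ ≤ c) :
    supportFun K v ≤ c :=
  csSup_le (hK.image _) (forall_mem_image.mpr h)

lemma supportFun_smul (K : Set E) {t : ℝ} (ht : 0 ≤ t) (v : E) :
    supportFun K (t • v) = t * supportFun K v := by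
  have : (fun x => ⟪x, t • v⟫) '' K = t • ((fun x => ⟪x, v⟫) '' K) := by
    rw [← image_smul, image_image]
    simp only [real_inner_smul_right, smul_eq_mul]
  rw [supportFun, this, Real.sSup_smul_of_nonneg ht, smul_eq_mul, supportFun]

lemma isSublinear_supportFun (hne : K.Nonempty) (hK : IsCompact K) :
    IsSublinear (supportFun K) where
  add_le v w := supportFun_le hne fun x hx => by
    rw [inner_add_right]
    exact add_le_add (le_supportFun hK hx v) (le_supportFun hK hx w)
  smul_eq _ ht v := supportFun_smul K ht v

lemma mem_of_forall_inner_le_supportFun [CompleteSpace E] (hne : K.Nonempty) (hcv : Convex ℝ K)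
    (hcl : IsClosed K) {z : E} (h : ∀ v, ⟪z, v⟫ ≤ supportFun K v) : z ∈ K := by
  by_contra hz
  obtain ⟨f, s, hf, hfz⟩ := geometric_hahn_banach_closed_point hcv hcl hz
  set v := (InnerProductSpace.toDual ℝ E).symm f
  have hfv : ∀ y, ⟪y, v⟫ = f y := fun y => by
    rw [real_inner_comm]
    exact InnerProductSpace.toDual_symm_apply
  have := (h v).trans (supportFun_le hne fun x hx => (hfv x).trans_le (hf x hx).le)
  rw [hfv] at this
  linarith

lemma exists_add_mem_smul_of_le_smul_supportFun [FiniteDimensional ℝ E] {L : Set E}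
    (hK : IsCompact K) (hLne : L.Nonempty) (hLcv : Convex ℝ L) (hLcl : IsClosed L)
    {r : ℝ} (hr : 0 < r) {φ : E →ₗ[ℝ] ℝ} (hφ : ∀ v, φ v ≤ r * supportFun L v - supportFun K v) :
    ∃ c : E, ∀ x ∈ K, x + c ∈ r • L := by
  set c := (InnerProductSpace.toDual ℝ E).symm (LinearMap.toContinuousLinearMap φ)
  have hc : ∀ v, ⟪c, v⟫ = φ v := fun v => InnerProductSpace.toDual_symm_apply
  refine ⟨c, fun x hx => (mem_smul_set_iff_inv_smul_mem₀ hr.ne' _ _).mpr ?_⟩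
  refine mem_of_forall_inner_le_supportFun hLne hLcv hLcl fun v => ?_
  rw [real_inner_smul_left, inner_add_left, hc, inv_mul_le_iff₀ hr]
  linarith [hφ v, le_supportFun hK hx v]

lemma exists_unit_orthogonal_of_sum_eq_zero [FiniteDimensional ℝ E] {k : ℕ}
    (hk : k < finrank ℝ E) {b : Fin (k + 1) → E} (hb : ∑ i, b i = 0) : ∃ u : E, ‖u‖ = 1 ∧ ∀ i, b i ∈ (ℝ ∙ u)ᗮ := by
  set W := Submodule.span ℝ (Set.range fun i : Fin k => b i.succ)
  have hbW : ∀ i, b i ∈ W := by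
    refine Fin.cases ?_ fun i => Submodule.subset_span ⟨i, rfl⟩
    rw [Fin.sum_univ_succ, add_eq_zero_iff_eq_neg] at hb
    rw [hb]
    exact W.neg_mem (W.sum_mem fun i _ => Submodule.subset_span ⟨i, rfl⟩)
  have hWperp : 0 < finrank ℝ Wᗮ := by
    have := W.finrank_add_finrank_orthogonal
    have : finrank ℝ W ≤ k :=
      (finrank_range_le_card (R := ℝ) fun i : Fin k => b i.succ).trans_eq (Fintype.card_fin k)
    omega
  obtain ⟨u, huW, hu⟩ :=
    Submodule.exists_mem_ne_zero_of_ne_bot (Submodule.one_le_finrank_iff.mp hWperp)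
  refine ⟨‖u‖⁻¹ • u, by simp [norm_smul, hu], fun i => ?_⟩
  rw [Submodule.mem_orthogonal_singleton_iff_inner_right, real_inner_smul_left,
    Submodule.inner_left_of_mem_orthogonal (hbW i) huW, mul_zero]

end SupportFunction

section Shadow

variable {n : ℕ} {K L : Set (EuclideanSpace ℝ (Fin n))}

lemma supportFun_add_inner_le_of_projSet_subset (hKne : K.Nonempty) (hL : IsCompact L)
    {u w : EuclideanSpace ℝ (Fin n)} (hsub : (fun y => y + w) '' projSet u K ⊆ projSet u L)
    {v : EuclideanSpace ℝ (Fin n)} (hv : v ∈ (ℝ ∙ u)ᗮ) :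
    supportFun K v + ⟪w, v⟫ ≤ supportFun L v := by
  have hproj : ∀ x, ⟪((ℝ ∙ u)ᗮ.orthogonalProjection x : EuclideanSpace ℝ (Fin n)), v⟫ = ⟪x, v⟫ :=
    fun x => by
      rw [← Submodule.starProjection_apply, Submodule.inner_starProjection_left_eq_right,
        Submodule.starProjection_eq_self_iff.mpr hv]
  suffices ∀ x ∈ K, ⟪x, v⟫ ≤ supportFun L v - ⟪w, v⟫ by linarith [supportFun_le hKne this]
  intro x hx
  obtain ⟨y, hy, hxy⟩ := hsub (mem_image_of_mem _ (mem_image_of_mem _ hx))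
  have := congrArg (fun z => ⟪z, v⟫) hxy
  simp only [inner_add_left, hproj] at this
  linarith [le_supportFun hL hy v]

lemma sum_supportFun_le_of_projSet_subset (hKne : K.Nonempty) (hL : IsCompact L)
    {u w : EuclideanSpace ℝ (Fin n)} (hsub : (fun y => y + w) '' projSet u K ⊆ projSet u L)
    {m : ℕ} {b : Fin m → EuclideanSpace ℝ (Fin n)} (hb : ∀ i, b i ∈ (ℝ ∙ u)ᗮ)
    (hsum : ∑ i, b i = 0) :
    ∑ i, supportFun K (b i) ≤ ∑ i, supportFun L (b i) := by
  have hw : ∑ i, ⟪w, b i⟫ = 0 := by rw [← inner_sum, hsum, inner_zero_right]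
  have := Finset.sum_le_sum fun i (_ : i ∈ Finset.univ) =>
    supportFun_add_inner_le_of_projSet_subset hKne hL hsub (hb i)
  rw [Finset.sum_add_distrib, hw, add_zero] at this
  exact this

lemma zeroSumNonneg_supportFun_sub_of_shadow (hKne : K.Nonempty) (hL : IsCompact L)
    (hcov : ∀ u : EuclideanSpace ℝ (Fin n), ‖u‖ = 1 →
      ∃ w ∈ (ℝ ∙ u)ᗮ, (fun y => y + w) '' projSet u K ⊆ projSet u L) :
    ∀ m ≤ n, ZeroSumNonneg (supportFun L - supportFun K) m := by
  rintro (_ | k) hk b hb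
  · simp
  obtain ⟨u, hu, hbu⟩ := exists_unit_orthogonal_of_sum_eq_zero (by simpa using hk) hb
  obtain ⟨w, -, hsub⟩ := hcov u hu
  simpa [Finset.sum_sub_distrib] using sum_supportFun_le_of_projSet_subset hKne hL hsub hbu hb

end Shadow

theorem shadow_covering_volume_bound_general {n : ℕ} (hn : 2 ≤ n)
    (K L : Set (EuclideanSpace ℝ (Fin n)))
    (hKne : K.Nonempty) (hKcpt : IsCompact K)
    (hLne : L.Nonempty) (hLcpt : IsCompact L) (hLcv : Convex ℝ L)
    (hcov : ∀ u : EuclideanSpace ℝ (Fin n), ‖u‖ = 1 →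
      ∃ w ∈ (ℝ ∙ u)ᗮ, (fun y => y + w) '' projSet u K ⊆ projSet u L) :
    volume K ≤ ENNReal.ofReal (((n : ℝ) / ((n : ℝ) - 1)) ^ n) * volume L := by
  set r := (n : ℝ) / ((n : ℝ) - 1)
  have hr : 0 < r := div_pos (by positivity) (by linarith [(Nat.ofNat_le_cast.mpr hn : 2 ≤ (n : ℝ))])
  have hK := isSublinear_supportFun hKne hKcpt
  have hL := isSublinear_supportFun hLne hLcpt
  have hg_smul : ∀ t : ℝ, 0 ≤ t → ∀ v, (r • supportFun L - supportFun K) (t • v) =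
      t * (r • supportFun L - supportFun K) v := fun t ht v => by
    simp only [Pi.sub_apply, Pi.smul_apply, smul_eq_mul, hK.smul_eq t ht, hL.smul_eq t ht]
    ring
  have hsmall := zeroSumNonneg_div_smul_sub hK hL hn
    (zeroSumNonneg_supportFun_sub_of_shadow hKne hLcpt hcov)
  obtain ⟨φ, hφ⟩ := exists_linearMap_le_of_zeroSumNonneg hg_smul
    (zeroSumNonneg_of_le_finrank_succ hg_smul fun m hm => hsmall m (by simpa using hm))
  obtain ⟨c, hc⟩ := exists_add_mem_smul_of_le_smul_supportFun hKcpt hLne hLcv hLcpt.isClosed hr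
    (φ := φ) (fun v => by simpa using hφ v)
  calc volume K ≤ volume ((· + c) ⁻¹' (r • L)) := measure_mono hc
    _ = volume (r • L) := measure_preimage_add_right _ _ _
    _ = ENNReal.ofReal (r ^ n) * volume L := by
      rw [Measure.addHaar_smul_of_nonneg _ hr.le, finrank_euclideanSpace_fin]

/-- shadow covering implies `V(K) ≤ (n/(n-1))ⁿ V(L)`. -/
theorem shadow_covering_volume_bound {n : ℕ} (hn : 2 ≤ n)
    (K L : Set (EuclideanSpace ℝ (Fin n)))
    (hKne : K.Nonempty) (hKcpt : IsCompact K) (hKcv : Convex ℝ K)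
    (hLne : L.Nonempty) (hLcpt : IsCompact L) (hLcv : Convex ℝ L)
    (hcov : ∀ u : EuclideanSpace ℝ (Fin n), ‖u‖ = 1 →
      ∃ w ∈ (ℝ ∙ u)ᗮ, (fun y => y + w) '' projSet u K ⊆ projSet u L) :
    volume K ≤ ENNReal.ofReal (((n : ℝ) / ((n : ℝ) - 1)) ^ n) * volume L :=
  shadow_covering_volume_bound_general hn K L hKne hKcpt hLne hLcpt hLcv hcov
end

section
/- Let K and L be nonempty compact convex sets in ℝⁿ and let ψ : ℝⁿ → ℝⁿ be an invertible (nonsingular) linear transformation. Then the orthogonal projection L_u contains a translate of K_u for every unit vector u if and only if the orthogonal projection (ψL)_u contains a translate of (ψK)_u for every unit vector u. -/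
open Set MeasureTheory Pointwise

/-!
The projection onto `u^⊥` has kernel `ℝ ∙ u`, so a translate of `K_u` lies in `L_u` exactly when
a translate of `K` lies in `L + ℝ ∙ u`. This reformulation mentions neither orthogonality nor the
length of `u`, only the line `ℝ ∙ u`, and a linear isomorphism `ψ` carries it to the same condition
for `ψ K`, `ψ L` and the line `ℝ ∙ ψ u`. Since `ψ` permutes the lines through the origin, the two
families of conditions coincide.
-/

def CoversAlong {R E : Type*} [Semiring R] [AddCommGroup E] [Module R E]
    (K L : Set E) (ℓ : Submodule R E) : Prop :=
  ∃ v : E, (· + v) '' K ⊆ L + (ℓ : Set E)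

section CoversAlong

variable {R E F : Type*} [Semiring R] [AddCommGroup E] [Module R E] [AddCommGroup F] [Module R F]

theorem CoversAlong.image (f : E →ₗ[R] F) {K L : Set E} {ℓ : Submodule R E}
    (h : CoversAlong K L ℓ) : CoversAlong (f '' K) (f '' L) (ℓ.map f) := by
  obtain ⟨v, hv⟩ := h
  refine ⟨f v, ?_⟩
  rintro _ ⟨_, ⟨k, hk, rfl⟩, rfl⟩
  obtain ⟨l, hl, m, hm, hlm⟩ := hv ⟨k, hk, rfl⟩
  exact ⟨f l, mem_image_of_mem f hl, f m, mem_image_of_mem f hm, by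
    simp only [← map_add, hlm]⟩

theorem coversAlong_image_iff (ψ : E ≃ₗ[R] F) {K L : Set E} {ℓ : Submodule R E} :
    CoversAlong (ψ '' K) (ψ '' L) (ℓ.map (ψ : E →ₗ[R] F)) ↔ CoversAlong K L ℓ := by
  refine ⟨fun h => ?_, CoversAlong.image (ψ : E →ₗ[R] F)⟩
  have := h.image (ψ.symm : F →ₗ[R] E)
  rw [LinearEquiv.coe_coe, image_image, image_image, ← Submodule.map_comp,
    ← LinearEquiv.coe_trans, LinearEquiv.self_trans_symm, LinearEquiv.refl_toLinearMap,
    Submodule.map_id] at this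
  simpa only [LinearEquiv.symm_apply_apply, image_id'] using this

theorem coversAlong_image_span_singleton_iff (ψ : E ≃ₗ[R] F) {K L : Set E} {x : E} :
    CoversAlong (ψ '' K) (ψ '' L) (R ∙ ψ x) ↔ CoversAlong K L (R ∙ x) := by
  rw [← coversAlong_image_iff ψ, Submodule.map_span, image_singleton, LinearEquiv.coe_coe]

end CoversAlong

theorem exists_add_image_starProjection_subset_iff {𝕜 E : Type*} [RCLike 𝕜]
    [NormedAddCommGroup E] [InnerProductSpace 𝕜 E] (S : Submodule 𝕜 E)
    [S.HasOrthogonalProjection] (K L : Set E) :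
    (∃ w ∈ S, (· + w) '' (S.starProjection '' K) ⊆ S.starProjection '' L) ↔
      CoversAlong K L Sᗮ := by
  constructor
  · rintro ⟨w, hw, hsub⟩
    refine ⟨w, ?_⟩
    rintro _ ⟨k, hk, rfl⟩
    obtain ⟨l, hl, hlk⟩ := hsub ⟨_, mem_image_of_mem _ hk, rfl⟩
    refine ⟨l, hl, k + w - l, ?_, add_sub_cancel _ _⟩
    rw [SetLike.mem_coe, ← Submodule.starProjection_apply_eq_zero_iff, map_sub, map_add,
      Submodule.starProjection_eq_self_iff.mpr hw, hlk, sub_self]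
  · rintro ⟨v, hv⟩
    refine ⟨S.starProjection v, Submodule.starProjection_apply_mem S v, ?_⟩
    rintro _ ⟨_, ⟨k, hk, rfl⟩, rfl⟩
    obtain ⟨l, hl, m, hm, hlm⟩ := hv ⟨k, hk, rfl⟩
    simp only at hlm
    have hm0 : S.starProjection m = 0 := S.starProjection_apply_eq_zero_iff.mpr hm
    refine ⟨l, hl, ?_⟩
    rw [← add_zero (S.starProjection l), ← hm0, ← map_add, hlm, map_add]

theorem projSet_eq_image_starProjection {n : ℕ} (u : EuclideanSpace ℝ (Fin n))
    (K : Set (EuclideanSpace ℝ (Fin n))) : projSet u K = (ℝ ∙ u)ᗮ.starProjection '' K :=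
  rfl

theorem exists_add_projSet_subset_iff {n : ℕ} (u : EuclideanSpace ℝ (Fin n))
    (K L : Set (EuclideanSpace ℝ (Fin n))) :
    (∃ w ∈ (ℝ ∙ u)ᗮ, (· + w) '' projSet u K ⊆ projSet u L) ↔ CoversAlong K L (ℝ ∙ u) := by
  simpa only [projSet_eq_image_starProjection, Submodule.orthogonal_orthogonal] using
    exists_add_image_starProjection_subset_iff (ℝ ∙ u)ᗮ K L

theorem forall_norm_eq_one_span_singleton_iff {E : Type*} [NormedAddCommGroup E]
    [NormedSpace ℝ E] {Q : Submodule ℝ E → Prop} :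
    (∀ u : E, ‖u‖ = 1 → Q (ℝ ∙ u)) ↔ ∀ u : E, u ≠ 0 → Q (ℝ ∙ u) := by
  refine ⟨fun h u hu => ?_, fun h u hu => h u (norm_ne_zero_iff.mp (hu ▸ one_ne_zero))⟩
  rw [← Submodule.span_singleton_smul_eq (inv_ne_zero (norm_ne_zero_iff.mpr hu)).isUnit]
  exact h _ (norm_smul_inv_norm hu)

theorem shadow_covering_linear_invariance_general {n : ℕ}
    (K L : Set (EuclideanSpace ℝ (Fin n)))
    (ψ : EuclideanSpace ℝ (Fin n) ≃ₗ[ℝ] EuclideanSpace ℝ (Fin n)) :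
    (∀ u : EuclideanSpace ℝ (Fin n), ‖u‖ = 1 →
      ∃ w ∈ (ℝ ∙ u)ᗮ, (fun y => y + w) '' projSet u K ⊆ projSet u L) ↔
    (∀ u : EuclideanSpace ℝ (Fin n), ‖u‖ = 1 →
      ∃ w ∈ (ℝ ∙ u)ᗮ,
        (fun y => y + w) '' projSet u (ψ '' K) ⊆ projSet u (ψ '' L)) := by
  simp only [exists_add_projSet_subset_iff]
  rw [forall_norm_eq_one_span_singleton_iff (Q := CoversAlong K L),
    forall_norm_eq_one_span_singleton_iff (Q := CoversAlong (ψ '' K) (ψ '' L))]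
  refine ⟨fun h u hu => ?_, fun h u hu => ?_⟩
  · simpa using (coversAlong_image_span_singleton_iff ψ).mpr (h (ψ.symm u) (by simpa using hu))
  · exact (coversAlong_image_span_singleton_iff ψ).mp (h (ψ u) (by simpa using hu))

/-- the shadow covering condition is invariant under invertible linear
transformations of both bodies. -/
theorem shadow_covering_linear_invariance {n : ℕ}
    (K L : Set (EuclideanSpace ℝ (Fin n)))
    (hKne : K.Nonempty) (hKcpt : IsCompact K) (hKcv : Convex ℝ K)
    (hLne : L.Nonempty) (hLcpt : IsCompact L) (hLcv : Convex ℝ L)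
    (ψ : EuclideanSpace ℝ (Fin n) ≃ₗ[ℝ] EuclideanSpace ℝ (Fin n)) :
    (∀ u : EuclideanSpace ℝ (Fin n), ‖u‖ = 1 →
      ∃ w ∈ (ℝ ∙ u)ᗮ, (fun y => y + w) '' projSet u K ⊆ projSet u L) ↔
    (∀ u : EuclideanSpace ℝ (Fin n), ‖u‖ = 1 →
      ∃ w ∈ (ℝ ∙ u)ᗮ,
        (fun y => y + w) '' projSet u (ψ '' K) ⊆ projSet u (ψ '' L)) :=
  shadow_covering_linear_invariance_general K L ψ
end

section
/- Let K be a nonempty compact convex set in ℝⁿ and let d ∈ {1, …, n−1}. Then for every (n−d)-dimensional linear subspace ξ ⊆ ℝⁿ, the orthogonal projection of the set (n−d)·(−K) onto ξ contains a translate of the orthogonal projection K_ξ of K onto ξ. -/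
/-!
The shadow `C = K_ξ` is a compact convex set in the `m`-dimensional space `ξ`, `m = n - d`, and
the shadow of `m • (-K)` is `m • (-C)`. A translate `C - t` lies in `m • (-C)` iff `t` lies in every
translate `y + m • C`, `y ∈ C`. By Helly's theorem it suffices to meet any `m + 1` of them, and
for `y₀, …, y_k ∈ C` with `k ≤ m` the point `y₀ + ⋯ + y_k + (m - k) • c` (any `c ∈ C`) does:
subtracting `y_i` leaves `k` points of `C` plus `(m - k) • c`, which lies in
`k • C + (m - k) • C = m • C` by convexity.
-/

open Set MeasureTheory Pointwise

/-- Orthogonal projection of a set onto a linear subspace `ξ` of `ℝⁿ`,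
viewed as a subset of the ambient space. -/
noncomputable def projSub {n : ℕ} (ξ : Submodule ℝ (EuclideanSpace ℝ (Fin n)))
    (K : Set (EuclideanSpace ℝ (Fin n))) : Set (EuclideanSpace ℝ (Fin n)) :=
  (fun x => (ξ.orthogonalProjection x : EuclideanSpace ℝ (Fin n))) '' K

open Finset in
theorem Convex.sum_mem_card_smul {ι 𝕜 E : Type*} [Field 𝕜] [LinearOrder 𝕜] [IsStrictOrderedRing 𝕜]
    [AddCommGroup E] [Module 𝕜 E] {C : Set E} (hC : Convex 𝕜 C) (hne : C.Nonempty)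
    {s : Finset ι} {f : ι → E} (hf : ∀ i ∈ s, f i ∈ C) :
    ∑ i ∈ s, f i ∈ (#s : 𝕜) • C := by
  classical
  induction s using Finset.induction_on with
  | empty => simp [zero_smul_set hne]
  | insert i s hi ih =>
    rw [sum_insert hi, card_insert_of_notMem hi, Nat.cast_succ,
      hC.add_smul (Nat.cast_nonneg _) zero_le_one, one_smul, add_comm (f i)]
    exact add_mem_add (ih fun j hj => hf j (mem_insert_of_mem hj))
      (hf i (mem_insert_self i s))

open Finset Module in
theorem Convex.exists_add_subset_smul_neg {E : Type*} [AddCommGroup E] [Module ℝ E]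
    [TopologicalSpace E] [ContinuousAdd E] [ContinuousConstSMul ℝ E] [T2Space E]
    [FiniteDimensional ℝ E] {C : Set E} (hC : Convex ℝ C) (hCc : IsCompact C) {a : ℝ}
    (ha : finrank ℝ E ≤ a) : ∃ t, (· + t) '' C ⊆ a • -C := by
  classical
  rcases C.eq_empty_or_nonempty with rfl | ⟨c₀, hc₀⟩
  · exact ⟨0, by simp⟩
  suffices h : (⋂ y : C, (y : E) +ᵥ a • C).Nonempty by
    obtain ⟨t, ht⟩ := h
    refine ⟨-t, ?_⟩
    rintro _ ⟨y, hy, rfl⟩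
    have := mem_vadd_set_iff_neg_vadd_mem.mp (mem_iInter.mp ht ⟨y, hy⟩)
    rw [smul_set_neg, ← Set.neg_mem_neg]
    simpa [add_comm] using this
  refine helly_theorem_compact' (𝕜 := ℝ) (fun y => (hC.smul a).vadd _)
    (fun y => (hCc.smul a).vadd _) fun I hI => ?_
  have hk : (#I : ℝ) - 1 ≤ a := by
    have : (#I : ℝ) ≤ finrank ℝ E + 1 := by exact_mod_cast hI
    linarith
  refine ⟨∑ y ∈ I, (y : E) + (a - (#I - 1)) • c₀, mem_iInter₂.mpr fun y hy => ?_⟩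
  have hsplit : a • C = ((#I : ℝ) - 1) • C + (a - (#I - 1)) • C := by
    rw [← hC.add_smul (sub_nonneg.mpr (by exact_mod_cast card_pos.mpr ⟨y, hy⟩))
      (sub_nonneg.mpr hk), add_sub_cancel]
  rw [mem_vadd_set_iff_neg_vadd_mem, vadd_eq_add, ← add_sum_erase I _ hy, add_assoc,
    neg_add_cancel_left, hsplit]
  refine add_mem_add ?_ (smul_mem_smul_set hc₀)
  rw [← cast_card_erase_of_mem hy]
  exact hC.sum_mem_card_smul ⟨c₀, hc₀⟩ fun z _ => z.2

theorem projSub_eq_image_subtype {n : ℕ} (ξ : Submodule ℝ (EuclideanSpace ℝ (Fin n)))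
    (K : Set (EuclideanSpace ℝ (Fin n))) :
    projSub ξ K = ξ.subtype '' (ξ.orthogonalProjectionOnto '' K) :=
  (image_image _ _ _).symm

theorem shadow_of_scaled_reflection_covers_general {n d : ℕ} (hdn : d < n)
    (K : Set (EuclideanSpace ℝ (Fin n)))
    (hKcpt : IsCompact K) (hKcv : Convex ℝ K) :
    ∀ ξ : Submodule ℝ (EuclideanSpace ℝ (Fin n)), Module.finrank ℝ ξ = n - d →
      ∃ w ∈ ξ, (fun y => y + w) '' projSub ξ K ⊆
        projSub ξ (((n : ℝ) - (d : ℝ)) • (-K)) := by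
  intro ξ hξ
  have hrank : (Module.finrank ℝ ξ : ℝ) ≤ n - d := by rw [hξ, Nat.cast_sub hdn.le]
  obtain ⟨t, ht⟩ := (hKcv.linear_image ξ.orthogonalProjectionOnto.toLinearMap)
    |>.exists_add_subset_smul_neg (hKcpt.image ξ.orthogonalProjectionOnto.continuous) hrank
  refine ⟨t, t.2, ?_⟩
  calc (fun y => y + (t : EuclideanSpace ℝ (Fin n))) '' projSub ξ K
      = ξ.subtype '' ((· + t) '' (ξ.orthogonalProjectionOnto '' K)) := by
        simp only [projSub_eq_image_subtype, image_image, Submodule.subtype_apply,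
          Submodule.coe_add]
    _ ⊆ ξ.subtype '' (((n : ℝ) - d) • -(ξ.orthogonalProjectionOnto '' K)) := image_mono ht
    _ = projSub ξ (((n : ℝ) - d) • -K) := by
        simp only [projSub_eq_image_subtype, image_smul_set, image_neg]

/-- every `(n-d)`-dimensional shadow of `(n-d)·(-K)` contains a
translate of the corresponding shadow of `K`. -/
theorem shadow_of_scaled_reflection_covers {n d : ℕ} (hd1 : 1 ≤ d) (hdn : d < n)
    (K : Set (EuclideanSpace ℝ (Fin n)))
    (hKne : K.Nonempty) (hKcpt : IsCompact K) (hKcv : Convex ℝ K) :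
    ∀ ξ : Submodule ℝ (EuclideanSpace ℝ (Fin n)), Module.finrank ℝ ξ = n - d →
      ∃ w ∈ ξ, (fun y => y + w) '' projSub ξ K ⊆
        projSub ξ (((n : ℝ) - (d : ℝ)) • (-K)) :=
  shadow_of_scaled_reflection_covers_general hdn K hKcpt hKcv
end
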